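/- arXiv:2011.09960 — 5 statements merged into one kernel-verified Lean document; each statement's English description precedes it below -/
import Mathlib

section
/- Let u, v be unit vectors in ℂ^n with |⟨u,v⟩| = c for some c ∈ [0,1), let ε > 0, and set D = (e^ε − 1)² + 4(1−c²)e^ε. Then |u⟩⟨u| − e^ε |v⟩⟨v| ≤ ((1 − e^ε + √D)/2)·I_n in the positive semidefinite (Loewner) order; that is, ((1 − e^ε + √D)/2)·I_n − |u⟩⟨u| + e^ε |v⟩⟨v| is positive semidefinite. -/
open scoped BigOperators Classical ComplexOrder
open Matrix

noncomputable section

/-- `p` is a probability vector in `ℝ^d`. -/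
def IsProbVec {d : ℕ} (p : Fin d → ℝ) : Prop :=
  (∀ k, 0 ≤ p k) ∧ ∑ k, p k = 1

/-- `(p i)_{i=1}^n` is an `ε`-differentially private `n`-tuple of probability vectors. -/
def IsDP {n d : ℕ} (ε : ℝ) (p : Fin n → Fin d → ℝ) : Prop :=
  (∀ i, IsProbVec (p i)) ∧ ∀ i j k, p i k ≤ Real.exp ε * p j k

/-- Classical RLD Fisher information `J_θ(p,q)`. -/
def Jc {d : ℕ} (θ : ℝ) (p q : Fin d → ℝ) : ℝ :=
  ∑ k, (q k - p k) ^ 2 / ((1 - θ) * p k + θ * q k)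

/-- `ρ` is a density matrix on `ℂ^d`. -/
def IsDensityMatrix {d : ℕ} (ρ : Matrix (Fin d) (Fin d) ℂ) : Prop :=
  ρ.PosSemidef ∧ ρ.trace = 1

/-- `(ρ i)_{i=1}^n` is a classical-quantum `ε`-differentially private `n`-tuple. -/
def IsCQDP {n d : ℕ} (ε : ℝ) (ρ : Fin n → Matrix (Fin d) (Fin d) ℂ) : Prop :=
  (∀ i, IsDensityMatrix (ρ i)) ∧ ∀ i j, (Real.exp ε • ρ j - ρ i).PosSemidef

/-- `(ρ i)_{i=1}^n` lies in the essentially classical set `EC_n(ε)`. -/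
def InEC {n d : ℕ} (ε : ℝ) (ρ : Fin n → Matrix (Fin d) (Fin d) ℂ) : Prop :=
  ∃ (m : ℕ) (p : Fin n → Fin m → ℝ) (σ : Fin m → Matrix (Fin d) (Fin d) ℂ),
    IsDP ε p ∧ (∀ k, IsDensityMatrix (σ k)) ∧ ∀ i, ρ i = ∑ k, (p i k : ℂ) • σ k

/-- Quantum RLD Fisher information `J_θ(ρ,σ) = Tr((σ−ρ)²((1−θ)ρ+θσ)⁻¹)`. -/
def Jq {d : ℕ} (θ : ℝ) (ρ σ : Matrix (Fin d) (Fin d) ℂ) : ℝ :=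
  (((σ - ρ) ^ 2 * ((1 - θ : ℂ) • ρ + (θ : ℂ) • σ)⁻¹).trace).re

/-- The function `f_θ(α,β) = (α−β)²/((1−θ)α+θβ)`. -/
def fTheta (θ α β : ℝ) : ℝ := (α - β) ^ 2 / ((1 - θ) * α + θ * β)

/-- `min_{i≠j} J_θ(p_i,p_j)` (classical). -/
def minPairsC {n d : ℕ} (θ : ℝ) (p : Fin n → Fin d → ℝ) : ℝ :=
  ⨅ ij : {q : Fin n × Fin n // q.1 ≠ q.2}, Jc θ (p ij.val.1) (p ij.val.2)

/-- `min_{i≠j} J_θ(ρ_i,ρ_j)` (quantum). -/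
def minPairsQ {n d : ℕ} (θ : ℝ) (ρ : Fin n → Matrix (Fin d) (Fin d) ℂ) : ℝ :=
  ⨅ ij : {q : Fin n × Fin n // q.1 ≠ q.2}, Jq θ (ρ ij.val.1) (ρ ij.val.2)

/-- `avg_{i≠j} J_θ(p_i,p_j)` (classical): arithmetic mean over ordered pairs `i ≠ j`. -/
def avgPairsC {n d : ℕ} (θ : ℝ) (p : Fin n → Fin d → ℝ) : ℝ :=
  (∑ i, ∑ j, if i ≠ j then Jc θ (p i) (p j) else 0) / ((n : ℝ) * ((n : ℝ) - 1))

/-- `avg_{i≠j} J_θ(ρ_i,ρ_j)` (quantum): arithmetic mean over ordered pairs `i ≠ j`. -/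
def avgPairsQ {n d : ℕ} (θ : ℝ) (ρ : Fin n → Matrix (Fin d) (Fin d) ℂ) : ℝ :=
  (∑ i, ∑ j, if i ≠ j then Jq θ (ρ i) (ρ j) else 0) / ((n : ℝ) * ((n : ℝ) - 1))

/-- `M_n^C(ε;J_θ)`: supremum of `min_{i≠j} J_θ(p_i,p_j)` over `ε`-DP `n`-tuples with
positive entries, over all dimensions `d`. -/
def MC (n : ℕ) (ε θ : ℝ) : ℝ :=
  sSup {x : ℝ | ∃ (d : ℕ) (p : Fin n → Fin d → ℝ),
    IsDP ε p ∧ (∀ i k, 0 < p i k) ∧ x = minPairsC θ p}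

/-- `M_n^EC(ε;J_θ)`: supremum of `min_{i≠j} J_θ(ρ_i,ρ_j)` over full-rank `n`-tuples in
`EC_n(ε)`, over all dimensions `d`. -/
def MEC (n : ℕ) (ε θ : ℝ) : ℝ :=
  sSup {x : ℝ | ∃ (d : ℕ) (ρ : Fin n → Matrix (Fin d) (Fin d) ℂ),
    InEC ε ρ ∧ (∀ i, (ρ i).PosDef) ∧ x = minPairsQ θ ρ}

/-- `M_n^CQ(ε;J_θ)`: supremum of `min_{i≠j} J_θ(ρ_i,ρ_j)` over full-rank CQ `ε`-DP
`n`-tuples, over all dimensions `d`. -/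
def MCQ (n : ℕ) (ε θ : ℝ) : ℝ :=
  sSup {x : ℝ | ∃ (d : ℕ) (ρ : Fin n → Matrix (Fin d) (Fin d) ℂ),
    IsCQDP ε ρ ∧ (∀ i, (ρ i).PosDef) ∧ x = minPairsQ θ ρ}

/-- `M_2^C(ε;J_θ)` as the supremum of `J_θ(p,q)` over `ε`-DP pairs with positive entries. -/
def M2C (ε θ : ℝ) : ℝ :=
  sSup {x : ℝ | ∃ (d : ℕ) (p q : Fin d → ℝ),
    IsProbVec p ∧ IsProbVec q ∧ (∀ k, 0 < p k) ∧ (∀ k, 0 < q k) ∧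
    (∀ k, p k ≤ Real.exp ε * q k ∧ q k ≤ Real.exp ε * p k) ∧
    x = Jc θ p q}

/-- `max_{1 ≤ k ≤ n/2} k(n−k)/(k e^ε + n − k)`. -/
def maxK (n : ℕ) (ε : ℝ) : ℝ :=
  sSup {x : ℝ | ∃ k : ℕ, 1 ≤ k ∧ 2 * k ≤ n ∧
    x = ((k : ℝ) * ((n : ℝ) - (k : ℝ))) / ((k : ℝ) * Real.exp ε + (n : ℝ) - (k : ℝ))}


/-! Write `E = exp ε`, `m = 1 - c²` and let `t` be the positive root of `t² + (E - 1)t = mE`,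
which is the scalar in front of the identity. At a vector `x` the quadratic form of the matrix is
`t‖x‖² - α² + Eβ²` with `α = |⟨u,x⟩|`, `β = |⟨v,x⟩|`. Applying Cauchy–Schwarz to the component of
`v` orthogonal to `u` and the component of `x` orthogonal to `u` gives the Gram constraint
`α² + β² - 2cαβ ≤ m‖x‖²`. The root satisfies `(t - m)(t + Em) = c²t²`, so by AM–GM
`m(α² - Eβ²) ≤ t(α² + β² - 2cαβ) ≤ tm‖x‖²`. -/

lemma two_mul_mul_le_of_mul_eq_sq {X Y k a b : ℝ} (hX : 0 ≤ X) (hY : 0 ≤ Y) (hXY : X * Y = k ^ 2) :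
    2 * k * a * b ≤ X * a ^ 2 + Y * b ^ 2 := by
  refine le_of_sq_le_sq ?_ (by positivity)
  have : (X * a ^ 2 + Y * b ^ 2) ^ 2 - (2 * k * a * b) ^ 2 = (X * a ^ 2 - Y * b ^ 2) ^ 2 := by
    linear_combination (4 * a ^ 2 * b ^ 2) * hXY
  nlinarith [sq_nonneg (X * a ^ 2 - Y * b ^ 2)]

lemma quadratic_root_pos_and_eq {m E t : ℝ} (hm : 0 < m) (hE : 0 < E)
    (ht : t = (1 - E + √((E - 1) ^ 2 + 4 * m * E)) / 2) :
    0 < t ∧ t ^ 2 + (E - 1) * t = m * E := by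
  have hD : 0 ≤ (E - 1) ^ 2 + 4 * m * E := by positivity
  subst ht
  constructor
  · have : |E - 1| < √((E - 1) ^ 2 + 4 * m * E) := by
      rw [← Real.sqrt_sq_eq_abs]
      exact Real.sqrt_lt_sqrt (sq_nonneg _) (by nlinarith)
    linarith [le_abs_self (E - 1)]
  · linear_combination Real.sq_sqrt hD / 4

lemma sq_sub_mul_sq_le_of_gram {c E t s α β : ℝ} (hc : c ^ 2 < 1) (hE : 0 < E) (ht : 0 < t)
    (hroot : t ^ 2 + (E - 1) * t = (1 - c ^ 2) * E)
    (hgram : α ^ 2 + β ^ 2 - 2 * c * α * β ≤ (1 - c ^ 2) * s) :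
    α ^ 2 - E * β ^ 2 ≤ t * s := by
  set m := 1 - c ^ 2
  have hm : 0 < m := by simp only [m]; linarith
  have htm : m ≤ t := by
    have : (t - m) * (t + E) = c ^ 2 * t := by simp only [m]; linear_combination hroot
    nlinarith [sq_nonneg c]
  have hamgm : 2 * (c * t) * α * β ≤ (t - m) * α ^ 2 + (t + E * m) * β ^ 2 :=
    two_mul_mul_le_of_mul_eq_sq (by linarith) (by positivity)
      (by simp only [m]; linear_combination (1 - c ^ 2) * hroot)
  refine le_of_mul_le_mul_left ?_ hm
  calc m * (α ^ 2 - E * β ^ 2) ≤ t * (α ^ 2 + β ^ 2 - 2 * c * α * β) := by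
        linear_combination hamgm
    _ ≤ t * (m * s) := by gcongr
    _ = m * (t * s) := by ring

open scoped InnerProductSpace

section InnerProduct

variable {𝕜 E : Type*} [RCLike 𝕜] [NormedAddCommGroup E] [InnerProductSpace 𝕜 E]

lemma norm_sub_inner_smul_sq {u : E} (hu : ‖u‖ = 1) (x : E) :
    ‖x - ⟪u, x⟫_𝕜 • u‖ ^ 2 = ‖x‖ ^ 2 - ‖⟪u, x⟫_𝕜‖ ^ 2 := by
  rw [@norm_sub_sq 𝕜, inner_smul_right, ← inner_conj_symm, norm_smul, hu, RCLike.conj_mul]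
  norm_cast
  rw [RCLike.norm_conj]
  ring

lemma sq_norm_inner_le_of_inner_eq_zero {u w : E} (hu : ‖u‖ = 1) (huw : ⟪u, w⟫_𝕜 = 0) (x : E) :
    ‖⟪w, x⟫_𝕜‖ ^ 2 ≤ ‖w‖ ^ 2 * (‖x‖ ^ 2 - ‖⟪u, x⟫_𝕜‖ ^ 2) := by
  have hwu : ⟪w, u⟫_𝕜 = 0 := by rw [← inner_conj_symm, huw, map_zero]
  have h : ⟪w, x⟫_𝕜 = ⟪w, x - ⟪u, x⟫_𝕜 • u⟫_𝕜 := by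
    rw [inner_sub_right, inner_smul_right, hwu, mul_zero, sub_zero]
  rw [h, ← norm_sub_inner_smul_sq hu, ← mul_pow]
  gcongr
  exact norm_inner_le_norm _ _

lemma sq_norm_inner_add_sq_norm_inner_sub_le {u v : E} (hu : ‖u‖ = 1) (hv : ‖v‖ = 1) (x : E) :
    ‖⟪u, x⟫_𝕜‖ ^ 2 + ‖⟪v, x⟫_𝕜‖ ^ 2 - 2 * ‖⟪u, v⟫_𝕜‖ * ‖⟪u, x⟫_𝕜‖ * ‖⟪v, x⟫_𝕜‖
      ≤ (1 - ‖⟪u, v⟫_𝕜‖ ^ 2) * ‖x‖ ^ 2 := by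
  set w := v - ⟪u, v⟫_𝕜 • u
  have huw : ⟪u, w⟫_𝕜 = 0 := by
    rw [inner_sub_right, inner_smul_right, inner_self_eq_norm_sq_to_K, hu]; simp
  have hw : ‖w‖ ^ 2 = 1 - ‖⟪u, v⟫_𝕜‖ ^ 2 := by rw [norm_sub_inner_smul_sq hu, hv, one_pow]
  have hwx : ⟪w, x⟫_𝕜 = ⟪v, x⟫_𝕜 - (starRingEnd 𝕜 ⟪u, v⟫_𝕜) * ⟪u, x⟫_𝕜 := by
    rw [inner_sub_left, inner_smul_left]
  have hrev : (‖⟪v, x⟫_𝕜‖ - ‖⟪u, v⟫_𝕜‖ * ‖⟪u, x⟫_𝕜‖) ^ 2 ≤ ‖⟪w, x⟫_𝕜‖ ^ 2 := by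
    have := abs_norm_sub_norm_le (⟪v, x⟫_𝕜) ((starRingEnd 𝕜 ⟪u, v⟫_𝕜) * ⟪u, x⟫_𝕜)
    rw [norm_mul, RCLike.norm_conj, ← hwx] at this
    rw [← sq_abs]
    gcongr
  have hbessel := sq_norm_inner_le_of_inner_eq_zero hu huw x
  rw [hw] at hbessel
  nlinarith

theorem sq_norm_inner_sub_mul_sq_norm_inner_le {u v : E} (hu : ‖u‖ = 1) (hv : ‖v‖ = 1)
    (huv : ‖⟪u, v⟫_𝕜‖ < 1) {e : ℝ} (he : 0 < e) (x : E) :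
    ‖⟪u, x⟫_𝕜‖ ^ 2 - e * ‖⟪v, x⟫_𝕜‖ ^ 2
      ≤ (1 - e + √((e - 1) ^ 2 + 4 * (1 - ‖⟪u, v⟫_𝕜‖ ^ 2) * e)) / 2 * ‖x‖ ^ 2 := by
  have hc : ‖⟪u, v⟫_𝕜‖ ^ 2 < 1 := by nlinarith [norm_nonneg ⟪u, v⟫_𝕜]
  obtain ⟨ht, hroot⟩ := quadratic_root_pos_and_eq (sub_pos.mpr hc) he rfl
  exact sq_sub_mul_sq_le_of_gram hc he ht hroot (sq_norm_inner_add_sq_norm_inner_sub_le hu hv x)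

end InnerProduct

open WithLp

section Matrix

variable {𝕜 n : Type*} [RCLike 𝕜] [Fintype n]

lemma star_dotProduct_vecMulVec_mulVec (u x : n → 𝕜) :
    star x ⬝ᵥ (vecMulVec u (star u) *ᵥ x) = ((‖⟪toLp 2 u, toLp 2 x⟫_𝕜‖ ^ 2 : ℝ) : 𝕜) := by
  rw [vecMulVec_mulVec, op_smul_eq_smul, dotProduct_smul, star_dotProduct x u, smul_eq_mul,
    EuclideanSpace.inner_toLp_toLp, dotProduct_comm x, RCLike.ofReal_pow, ← RCLike.mul_conj]
  rfl

lemma posSemidef_smul_one_sub_vecMulVec_add_smul_vecMulVec [DecidableEq n] {t e : ℝ} {u v : n → 𝕜}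
    (h : ∀ x : EuclideanSpace 𝕜 n,
      ‖⟪toLp 2 u, x⟫_𝕜‖ ^ 2 - e * ‖⟪toLp 2 v, x⟫_𝕜‖ ^ 2 ≤ t * ‖x‖ ^ 2) :
    (t • (1 : Matrix n n 𝕜) - vecMulVec u (star u) + e • vecMulVec v (star v)).PosSemidef := by
  refine posSemidef_iff_dotProduct_mulVec.mpr ⟨?_, fun x => ?_⟩
  · exact ((isHermitian_one.smul (IsSelfAdjoint.all t)).sub
      (posSemidef_vecMulVec_self_star u).isHermitian).add
      ((posSemidef_vecMulVec_self_star v).isHermitian.smul (IsSelfAdjoint.all e))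
  · have hx : star x ⬝ᵥ x = ((‖toLp 2 x‖ ^ 2 : ℝ) : 𝕜) := by
      rw [RCLike.ofReal_pow, ← inner_self_eq_norm_sq_to_K, EuclideanSpace.inner_toLp_toLp,
        dotProduct_comm]
    rw [add_mulVec, sub_mulVec, smul_mulVec, smul_mulVec, one_mulVec, dotProduct_add,
      dotProduct_sub, dotProduct_smul, dotProduct_smul, hx, star_dotProduct_vecMulVec_mulVec,
      star_dotProduct_vecMulVec_mulVec, RCLike.real_smul_eq_coe_mul, RCLike.real_smul_eq_coe_mul]
    norm_cast
    linarith [h (toLp 2 x)]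

end Matrix

theorem statement11_general (n : ℕ) (u v : Fin n → ℂ)
    (hu : ∑ k, ‖u k‖ ^ 2 = 1) (hv : ∑ k, ‖v k‖ ^ 2 = 1)
    (c : ℝ) (hc1 : c < 1)
    (huv : ‖∑ k, starRingEnd ℂ (u k) * v k‖ = c)
    (ε : ℝ)
    (D : ℝ) (hD : D = (Real.exp ε - 1) ^ 2 + 4 * (1 - c ^ 2) * Real.exp ε) :
    (((1 - Real.exp ε + Real.sqrt D) / 2) • (1 : Matrix (Fin n) (Fin n) ℂ)
      - Matrix.of (fun a b => u a * starRingEnd ℂ (u b))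
      + Real.exp ε • Matrix.of (fun a b => v a * starRingEnd ℂ (v b))).PosSemidef := by
  have hunit : ∀ w : Fin n → ℂ, ∑ k, ‖w k‖ ^ 2 = 1 → ‖toLp 2 w‖ = 1 := fun w hw => by
    rw [EuclideanSpace.norm_eq, hw, Real.sqrt_one]
  have hinner : ⟪toLp 2 u, toLp 2 v⟫_ℂ = ∑ k, starRingEnd ℂ (u k) * v k := by
    rw [EuclideanSpace.inner_toLp_toLp, dotProduct_comm]; rfl
  subst hD huv
  rw [← hinner] at hc1 ⊢
  exact posSemidef_smul_one_sub_vecMulVec_add_smul_vecMulVec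
    (sq_norm_inner_sub_mul_sq_norm_inner_le (hunit u hu) (hunit v hv) hc1 (Real.exp_pos ε))

/-- for unit vectors `u,v ∈ ℂ^n` with `|⟨u,v⟩| = c ∈ [0,1)` and `ε > 0`,
`|u⟩⟨u| − e^ε|v⟩⟨v| ≤ ((1−e^ε+√D)/2)·I_n` where `D = (e^ε−1)² + 4(1−c²)e^ε`. -/
theorem statement11 (n : ℕ) (u v : Fin n → ℂ)
    (hu : ∑ k, ‖u k‖ ^ 2 = 1) (hv : ∑ k, ‖v k‖ ^ 2 = 1)
    (c : ℝ) (hc0 : 0 ≤ c) (hc1 : c < 1)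
    (huv : ‖∑ k, starRingEnd ℂ (u k) * v k‖ = c)
    (ε : ℝ) (hε : 0 < ε)
    (D : ℝ) (hD : D = (Real.exp ε - 1) ^ 2 + 4 * (1 - c ^ 2) * Real.exp ε) :
    (((1 - Real.exp ε + Real.sqrt D) / 2) • (1 : Matrix (Fin n) (Fin n) ℂ)
      - Matrix.of (fun a b => u a * starRingEnd ℂ (u b))
      + Real.exp ε • Matrix.of (fun a b => v a * starRingEnd ℂ (v b))).PosSemidef :=
  statement11_general n u v hu hv c hc1 huv ε D hD

end
end

section
/- Let d ≥ 2 be an integer, c ∈ [0,1) and t > 0 real numbers, θ ∈ [0,1], and let u, v be unit vectors in ℂ^d with |⟨u,v⟩| = c. Define the density matrices ρ = (1/(d+t))(I_d + t|u⟩⟨u|) and σ = (1/(d+t))(I_d + t|v⟩⟨v|). Then the RLD Fisher information satisfies J_θ(ρ,σ) = (t²/(d+t)) · (1−c²) · (2+t)/(1 + t + t²θ(1−θ)(1−c²)). -/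
open scoped BigOperators Classical ComplexOrder
open Matrix

noncomputable section

/-!
Both states are positive multiples of `1 + t P` and `1 + t Q`, where `P = |u⟩⟨u|` and
`Q = |v⟩⟨v|` are idempotents with `P Q P = c² P` and `Q P Q = c² Q`. Hence the span of
`1, P, Q, P Q, Q P` is closed under multiplication, the mixture `(1 - θ) ρ + θ σ` is inverted
inside it by solving a linear system for four coefficients, and the trace of `(σ - ρ)²` times
that inverse only involves `tr P = tr Q = 1` and `tr (P Q) = c²`.
-/

section IdempotentPair

variable {𝕜 A : Type*} [Field 𝕜] [Ring A] [Algebra 𝕜 A] {P Q : A} {κ : 𝕜}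

theorem one_add_smul_add_smul_mul_eq_one (hP : IsIdempotentElem P) (hQ : IsIdempotentElem Q)
    (hPQP : P * Q * P = κ • P) (hQPQ : Q * P * Q = κ • Q) {a b x y z : 𝕜}
    (hx : x + a + a * x + a * z * κ = 0) (hy : y + b + b * y + b * z * κ = 0)
    (hzx : z + a * y + a * z = 0) (hzy : z + b * x + b * z = 0) :
    (1 + a • P + b • Q) * (1 + x • P + y • Q + z • (P * Q + Q * P)) = 1 := by
  have hPPQ : P * (P * Q) = P * Q := by rw [← mul_assoc, hP.eq]
  have hQQP : Q * (Q * P) = Q * P := by rw [← mul_assoc, hQ.eq]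
  rw [mul_assoc] at hPQP hQPQ
  simp only [add_mul, mul_add, one_mul, mul_one, smul_mul_assoc, mul_smul_comm, smul_smul,
    hP.eq, hQ.eq, hPPQ, hQQP, hPQP, hQPQ]
  linear_combination (norm := module) hx • P + hy • Q + hzx • (P * Q) + hzy • (Q * P)

end IdempotentPair

section TracePair

variable {𝕜 n : Type*} [Field 𝕜] [Fintype n] [DecidableEq n] {P Q : Matrix n n 𝕜} {κ : 𝕜}

theorem trace_sub_sq_mul_one_add (hP : IsIdempotentElem P) (hQ : IsIdempotentElem Q)
    (hPQP : P * Q * P = κ • P) (hQPQ : Q * P * Q = κ • Q)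
    (htrP : trace P = 1) (htrQ : trace Q = 1) (htrPQ : trace (P * Q) = κ) (x y z : 𝕜) :
    trace ((Q - P) ^ 2 * (1 + x • P + y • Q + z • (P * Q + Q * P))) =
      (1 - κ) * (2 + x + y + 2 * z * κ) := by
  have htrQP : trace (Q * P) = κ := by rw [trace_mul_comm, htrPQ]
  have hPPQ : P * (P * Q) = P * Q := by rw [← mul_assoc, hP.eq]
  have hQQP : Q * (Q * P) = Q * P := by rw [← mul_assoc, hQ.eq]
  rw [mul_assoc] at hPQP hQPQ
  rw [sq, sub_mul, mul_sub, mul_sub, hP.eq, hQ.eq]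
  simp only [sub_mul, mul_add, mul_sub, mul_one, mul_smul_comm, mul_assoc, hP.eq, hQ.eq, hPPQ,
    hQQP, hPQP, hQPQ, trace_add, trace_sub, trace_smul, htrP, htrQ, htrPQ, htrQP, smul_eq_mul]
  ring

end TracePair

section RankOne

variable {𝕜 n : Type*} [RCLike 𝕜] [Fintype n] {u v : n → 𝕜}

theorem star_dotProduct_self_eq_one (hu : ∑ k, ‖u k‖ ^ 2 = 1) : star u ⬝ᵥ u = 1 := by
  simp only [dotProduct, Pi.star_apply, RCLike.star_def, RCLike.conj_mul]
  exact_mod_cast hu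

theorem isIdempotentElem_vecMulVec_star (hu : star u ⬝ᵥ u = 1) :
    IsIdempotentElem (vecMulVec u (star u)) := by
  rw [IsIdempotentElem, vecMulVec_mul_vecMulVec, hu, one_smul]

theorem vecMulVec_star_mul_mul_self (u v : n → 𝕜) :
    vecMulVec u (star u) * vecMulVec v (star v) * vecMulVec u (star u) =
      (‖star u ⬝ᵥ v‖ : 𝕜) ^ 2 • vecMulVec u (star u) := by
  rw [vecMulVec_mul_vecMulVec, vecMulVec_mul_vecMulVec, smul_dotProduct, smul_eq_mul,
    star_dotProduct v u, RCLike.star_def, RCLike.mul_conj, vecMulVec_smul]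

theorem trace_vecMulVec_star_mul (u v : n → 𝕜) :
    trace (vecMulVec u (star u) * vecMulVec v (star v)) = (‖star u ⬝ᵥ v‖ : 𝕜) ^ 2 := by
  rw [vecMulVec_mul_vecMulVec, trace_vecMulVec, dotProduct_smul, smul_eq_mul,
    dotProduct_comm u, star_dotProduct v u, RCLike.star_def, RCLike.mul_conj]

end RankOne

theorem Jq_smul_one_add_smul {d : ℕ} {P Q : Matrix (Fin d) (Fin d) ℂ}
    (hP : IsIdempotentElem P) (hQ : IsIdempotentElem Q) {κ : ℝ}
    (hPQP : P * Q * P = (κ : ℂ) • P) (hQPQ : Q * P * Q = (κ : ℂ) • Q)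
    (htrP : trace P = 1) (htrQ : trace Q = 1) (htrPQ : trace (P * Q) = κ)
    {α t θ : ℝ} (hα : α ≠ 0) (hD : 1 + t + t ^ 2 * θ * (1 - θ) * (1 - κ) ≠ 0) :
    Jq θ (α • (1 + t • P)) (α • (1 + t • Q)) =
      α * t ^ 2 * (1 - κ) * (2 + t) / (1 + t + t ^ 2 * θ * (1 - θ) * (1 - κ)) := by
  -- `D = (1 + a) (1 + b) - a b κ` is the determinant of the linear system solved by `x, y, z`
  set D := 1 + t + t ^ 2 * θ * (1 - θ) * (1 - κ)
  set a : ℂ := ((t * (1 - θ) : ℝ) : ℂ)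
  set b : ℂ := ((t * θ : ℝ) : ℂ)
  set x : ℂ := ((-(t * (1 - θ)) * (1 + t * θ) / D : ℝ) : ℂ)
  set y : ℂ := ((-(t * θ) * (1 + t * (1 - θ)) / D : ℝ) : ℂ)
  set z : ℂ := ((t * (1 - θ) * (t * θ) / D : ℝ) : ℂ)
  have hinv : ((1 - θ : ℂ) • (α • (1 + t • P)) + (θ : ℂ) • (α • (1 + t • Q)))⁻¹ =
      ((α⁻¹ : ℝ) : ℂ) • (1 + x • P + y • Q + z • (P * Q + Q * P)) := by
    have hmid : (1 - θ : ℂ) • (α • (1 + t • P)) + (θ : ℂ) • (α • (1 + t • Q)) =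
        (α : ℂ) • (1 + a • P + b • Q) := by
      simp only [← Complex.coe_smul, a, b]
      match_scalars <;> ring
    have hN : (1 + a • P + b • Q) * (1 + x • P + y • Q + z • (P * Q + Q * P)) = 1 := by
      apply one_add_smul_add_smul_mul_eq_one hP hQ hPQP hQPQ <;>
        simp only [a, b, x, y, z] <;> norm_cast <;> field_simp <;> ring
    apply Matrix.inv_eq_right_inv
    rw [hmid, smul_mul_smul_comm, hN, ← Complex.ofReal_mul, mul_inv_cancel₀ hα,
      Complex.ofReal_one, one_smul]
  have hdiff : α • (1 + t • Q) - α • (1 + t • P) = ((α * t : ℝ) : ℂ) • (Q - P) := by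
    simp only [← Complex.coe_smul]
    match_scalars <;> ring
  rw [Jq, hinv, hdiff, smul_pow, smul_mul_smul_comm, trace_smul,
    trace_sub_sq_mul_one_add hP hQ hPQP hQPQ htrP htrQ htrPQ, smul_eq_mul]
  simp only [x, y, z]
  norm_cast
  field_simp
  ring

theorem statement12_general (d : ℕ) (c t θ : ℝ)
    (hc0 : 0 ≤ c) (hc1 : c < 1) (ht : 0 < t) (hθ : θ ∈ Set.Icc (0 : ℝ) 1)
    (u v : Fin d → ℂ)
    (hu : ∑ k, ‖u k‖ ^ 2 = 1) (hv : ∑ k, ‖v k‖ ^ 2 = 1)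
    (huv : ‖∑ k, starRingEnd ℂ (u k) * v k‖ = c) :
    Jq θ
      (((d : ℝ) + t)⁻¹ • ((1 : Matrix (Fin d) (Fin d) ℂ) +
        t • Matrix.of fun a b => u a * starRingEnd ℂ (u b)))
      (((d : ℝ) + t)⁻¹ • ((1 : Matrix (Fin d) (Fin d) ℂ) +
        t • Matrix.of fun a b => v a * starRingEnd ℂ (v b)))
    = t ^ 2 / ((d : ℝ) + t) * (1 - c ^ 2) *
        ((2 + t) / (1 + t + t ^ 2 * θ * (1 - θ) * (1 - c ^ 2))) := by
  have hu' := star_dotProduct_self_eq_one hu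
  have hv' := star_dotProduct_self_eq_one hv
  have huv' : ‖star u ⬝ᵥ v‖ = c := huv
  have hvu : ‖star v ⬝ᵥ u‖ = c := by rw [star_dotProduct, norm_star, huv']
  have hdt : (d : ℝ) + t ≠ 0 := by positivity
  have hD : 0 < 1 + t + t ^ 2 * θ * (1 - θ) * (1 - c ^ 2) := by
    have : 0 ≤ t ^ 2 * θ * (1 - θ) * (1 - c ^ 2) :=
      mul_nonneg (mul_nonneg (mul_nonneg (sq_nonneg t) hθ.1) (sub_nonneg.2 hθ.2)) (by nlinarith)
    linarith
  refine (Jq_smul_one_add_smul (isIdempotentElem_vecMulVec_star hu')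
    (isIdempotentElem_vecMulVec_star hv') ?_ ?_ (by rw [trace_vecMulVec, dotProduct_comm, hu'])
    (by rw [trace_vecMulVec, dotProduct_comm, hv']) ?_ (inv_ne_zero hdt) hD.ne').trans ?_
  · rw [vecMulVec_star_mul_mul_self, huv']; push_cast; rfl
  · rw [vecMulVec_star_mul_mul_self, hvu]; push_cast; rfl
  · rw [trace_vecMulVec_star_mul, huv']; push_cast; rfl
  · field_simp

/-- for unit vectors `u,v ∈ ℂ^d` with `|⟨u,v⟩| = c`, the density matrices
`ρ = (1/(d+t))(I_d + t|u⟩⟨u|)` and `σ = (1/(d+t))(I_d + t|v⟩⟨v|)` satisfy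
`J_θ(ρ,σ) = (t²/(d+t))·(1−c²)·(2+t)/(1+t+t²θ(1−θ)(1−c²))`. -/
theorem statement12 (d : ℕ) (hd : 2 ≤ d) (c t θ : ℝ)
    (hc0 : 0 ≤ c) (hc1 : c < 1) (ht : 0 < t) (hθ : θ ∈ Set.Icc (0 : ℝ) 1)
    (u v : Fin d → ℂ)
    (hu : ∑ k, ‖u k‖ ^ 2 = 1) (hv : ∑ k, ‖v k‖ ^ 2 = 1)
    (huv : ‖∑ k, starRingEnd ℂ (u k) * v k‖ = c) :
    Jq θ
      (((d : ℝ) + t)⁻¹ • ((1 : Matrix (Fin d) (Fin d) ℂ) +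
        t • Matrix.of fun a b => u a * starRingEnd ℂ (u b)))
      (((d : ℝ) + t)⁻¹ • ((1 : Matrix (Fin d) (Fin d) ℂ) +
        t • Matrix.of fun a b => v a * starRingEnd ℂ (v b)))
    = t ^ 2 / ((d : ℝ) + t) * (1 - c ^ 2) *
        ((2 + t) / (1 + t + t ^ 2 * θ * (1 - θ) * (1 - c ^ 2))) :=
  statement12_general d c t θ hc0 hc1 ht hθ u v hu hv huv

end
end

section
/- For every real θ ∈ [0,1] and every real ε > 0, setting s = e^ε − 1, the supremum M_2^C(ε;J_θ) of J_θ(p,q) over ε-DP pairs (p,q) of probability vectors with positive entries equals s²/(((1−θ)s + 1)(θs + 1)). -/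
/-!
Write `E = e^ε`, `s = E - 1` and `c = s² / (((1 - θ) s + 1) (θ s + 1))`. For a single
coordinate with `p ≤ E q` and `q ≤ E p`, one has `(q - p)² / ((1 - θ) p + θ q) ≤ c (θ p + (1 - θ) q)`;
summing over the coordinates of two probability vectors gives `J_θ(p, q) ≤ c`.
Binary randomized response, `p = (E, 1) / (E + 1)` and `q = (1, E) / (E + 1)`, is `ε`-DP and
attains `J_θ(p, q) = c`, so the supremum is a maximum equal to `c`.
-/

open scoped BigOperators Classical ComplexOrder
open Matrix

noncomputable section

theorem one_sub_mul_add_mul_pos {θ a b : ℝ} (hθ : θ ∈ Set.Icc (0 : ℝ) 1) (ha : 0 < a)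
    (hb : 0 < b) : 0 < (1 - θ) * a + θ * b := by
  obtain ⟨h0, h1⟩ := hθ
  rcases h0.eq_or_lt with rfl | h0
  · simpa using ha
  · nlinarith [mul_nonneg (sub_nonneg.2 h1) ha.le, mul_pos h0 hb]

def rldBound (θ s : ℝ) : ℝ := s ^ 2 / (((1 - θ) * s + 1) * (θ * s + 1))

theorem rldBound_denominators_pos {θ E : ℝ} (hθ : θ ∈ Set.Icc (0 : ℝ) 1) (hE : 0 < E) :
    0 < (1 - θ) * (E - 1) + 1 ∧ 0 < θ * (E - 1) + 1 :=
  ⟨by linarith [one_sub_mul_add_mul_pos hθ hE one_pos],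
    by linarith [one_sub_mul_add_mul_pos hθ one_pos hE]⟩

theorem sq_sub_div_le_rldBound_mul {θ E p q : ℝ} (hθ : θ ∈ Set.Icc (0 : ℝ) 1)
    (hp : 0 < p) (hq : 0 < q) (hpq : p ≤ E * q) (hqp : q ≤ E * p) :
    (q - p) ^ 2 / ((1 - θ) * p + θ * q) ≤ rldBound θ (E - 1) * (θ * p + (1 - θ) * q) := by
  have hE : 0 < E := pos_of_mul_pos_left (hp.trans_le hpq) hq.le
  obtain ⟨hA, hB⟩ := rldBound_denominators_pos hθ hE
  rw [rldBound, div_mul_eq_mul_div, div_le_div_iff₀ (one_sub_mul_add_mul_pos hθ hp hq)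
    (mul_pos hA hB)]
  -- after clearing denominators the gap between the two sides is exactly `(E q - p) (E p - q)`
  linear_combination mul_nonneg (sub_nonneg.2 hpq) (sub_nonneg.2 hqp)

theorem Jc_le_rldBound {d : ℕ} {θ E : ℝ} {p q : Fin d → ℝ} (hθ : θ ∈ Set.Icc (0 : ℝ) 1)
    (hp : IsProbVec p) (hq : IsProbVec q) (hp_pos : ∀ k, 0 < p k) (hq_pos : ∀ k, 0 < q k)
    (hpq : ∀ k, p k ≤ E * q k) (hqp : ∀ k, q k ≤ E * p k) :
    Jc θ p q ≤ rldBound θ (E - 1) := calc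
  Jc θ p q ≤ ∑ k, rldBound θ (E - 1) * (θ * p k + (1 - θ) * q k) :=
    Finset.sum_le_sum fun k _ ↦
      sq_sub_div_le_rldBound_mul hθ (hp_pos k) (hq_pos k) (hpq k) (hqp k)
  _ = rldBound θ (E - 1) * (θ * ∑ k, p k + (1 - θ) * ∑ k, q k) := by
    simp only [Finset.mul_sum, ← Finset.sum_add_distrib]
  _ = rldBound θ (E - 1) := by rw [hp.2, hq.2]; ring

def randomizedResponse (E : ℝ) (i : Fin 2) : Fin 2 → ℝ :=
  fun k ↦ if k = i then E / (E + 1) else 1 / (E + 1)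

section randomizedResponse

variable {E : ℝ}

theorem randomizedResponse_pos (hE : 0 < E) (i k : Fin 2) : 0 < randomizedResponse E i k := by
  unfold randomizedResponse; split_ifs <;> positivity

theorem randomizedResponse_self (i : Fin 2) : randomizedResponse E i i = E / (E + 1) :=
  if_pos rfl

theorem randomizedResponse_of_ne {i k : Fin 2} (h : k ≠ i) :
    randomizedResponse E i k = 1 / (E + 1) :=
  if_neg h

theorem isProbVec_randomizedResponse (hE : 0 < E) (i : Fin 2) :
    IsProbVec (randomizedResponse E i) := by
  refine ⟨fun k ↦ (randomizedResponse_pos hE i k).le, ?_⟩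
  have h : E + 1 ≠ 0 := by positivity
  rw [Fin.sum_univ_two]
  match i with
  | 0 => rw [randomizedResponse_self, randomizedResponse_of_ne one_ne_zero, ← add_div, div_self h]
  | 1 => rw [randomizedResponse_self, randomizedResponse_of_ne zero_ne_one, ← add_div, add_comm,
      div_self h]

theorem randomizedResponse_le_mul (hE : 1 ≤ E) (i j k : Fin 2) :
    randomizedResponse E i k ≤ E * randomizedResponse E j k := by
  have h : 0 < E + 1 := by positivity
  unfold randomizedResponse
  split_ifs <;> rw [mul_div_assoc'] <;> gcongr <;> nlinarith

theorem Jc_randomizedResponse {θ : ℝ} (hθ : θ ∈ Set.Icc (0 : ℝ) 1) (hE : 0 < E) :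
    Jc θ (randomizedResponse E 0) (randomizedResponse E 1) = rldBound θ (E - 1) := by
  obtain ⟨hA, hB⟩ := rldBound_denominators_pos hθ hE
  have h : E + 1 ≠ 0 := by positivity
  have h0 : (1 - θ) * (E / (E + 1)) + θ * (1 / (E + 1)) = ((1 - θ) * (E - 1) + 1) / (E + 1) := by
    field_simp; ring
  have h1 : (1 - θ) * (1 / (E + 1)) + θ * (E / (E + 1)) = (θ * (E - 1) + 1) / (E + 1) := by
    field_simp; ring
  simp only [Jc, Fin.sum_univ_two, randomizedResponse_self, randomizedResponse_of_ne zero_ne_one,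
    randomizedResponse_of_ne one_ne_zero]
  -- each term is `(E - 1)² / ((E + 1) D)`, and the two denominators `D` sum to `E + 1`
  rw [h0, h1, rldBound]
  field_simp
  ring

end randomizedResponse

/-- for `θ ∈ [0,1]` and `ε > 0`, with `s = e^ε − 1`,
`M_2^C(ε;J_θ) = s²/(((1−θ)s+1)(θs+1))`. -/
theorem statement13 (θ ε : ℝ) (hθ : θ ∈ Set.Icc (0 : ℝ) 1) (hε : 0 < ε) :
    M2C ε θ = (Real.exp ε - 1) ^ 2 /
      (((1 - θ) * (Real.exp ε - 1) + 1) * (θ * (Real.exp ε - 1) + 1)) := by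
  have hE : 1 ≤ Real.exp ε := Real.one_le_exp hε.le
  have hE_pos : 0 < Real.exp ε := Real.exp_pos ε
  refine IsGreatest.csSup_eq ⟨⟨2, randomizedResponse _ 0, randomizedResponse _ 1,
    isProbVec_randomizedResponse hE_pos 0, isProbVec_randomizedResponse hE_pos 1,
    randomizedResponse_pos hE_pos 0, randomizedResponse_pos hE_pos 1,
    fun k ↦ ⟨randomizedResponse_le_mul hE 0 1 k, randomizedResponse_le_mul hE 1 0 k⟩,
    (Jc_randomizedResponse hθ hE_pos).symm⟩, ?_⟩
  rintro x ⟨d, p, q, hp, hq, hp_pos, hq_pos, hpq, rfl⟩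
  exact Jc_le_rldBound hθ hp hq hp_pos hq_pos (fun k ↦ (hpq k).1) (fun k ↦ (hpq k).2)

end
end

section
/- Let ε > 0 and c ∈ [1/2, 1) be real numbers, set D = (e^ε − 1)² + 4(1−c²)e^ε and t_max = 2(e^ε − 1)/(√D + 1 − e^ε), let u_1, u_2, u_3 be unit vectors in ℂ² with |⟨u_i,u_j⟩| = c for all i ≠ j, and define ρ_i = (1/(2+t_max))(I_2 + t_max|u_i⟩⟨u_i|) for i = 1,2,3. Then for every integer n ≥ 3, every CQ ε-DP n-tuple (σ_1,…,σ_n) of density matrices with σ_1 = ρ_1, σ_2 = ρ_2, σ_3 = ρ_3 does not lie in EC_n(ε). -/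
/-!
Write `E = e^ε`. The value `t_max` is chosen so that `E ρ_j - ρ_i` is singular for all
`i ≠ j`: its determinant is `(2 + t)⁻² ((E - 1)² (1 + t) - t² E (1 - c²))`. If
`σ_i = ∑_k p_i(k) τ_k`, then `E σ_j - σ_i = ∑_k (E p_j(k) - p_i(k)) τ_k` has nonnegative
coefficients, so every `τ_k` with a positive coefficient annihilates the kernel of `E ρ_j - ρ_i`.
A nonzero `2 × 2` matrix cannot annihilate the kernels of both `E ρ_j - ρ_i` and `E ρ_i - ρ_j`,
whose sum `(E - 1)(ρ_i + ρ_j)` is positive definite; hence for every `k` one of the two DP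
inequalities between `p_i(k)` and `p_j(k)` is tight. At a `k` with `p_1(k) > 0` the ratios
`p_i(k) / p_j(k)` around the cycle `1, 2, 3` would be three factors `E^{±1}` with product `1`,
which is impossible since `E ≠ 1`.
-/

open scoped BigOperators Classical ComplexOrder
open Matrix

noncomputable section

theorem mulVec_eq_zero_of_sum_smul_mulVec_eq_zero {d ι : Type*} [Fintype d] [Fintype ι]
    {τ : ι → Matrix d d ℂ} (hτ : ∀ k, (τ k).PosSemidef) {a : ι → ℝ} (ha : ∀ k, 0 ≤ a k)
    {v : d → ℂ} (hv : (∑ k, (a k : ℂ) • τ k) *ᵥ v = 0) {k : ι} (hk : a k ≠ 0) :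
    τ k *ᵥ v = 0 := by
  have hsum : ∑ l, (a l : ℂ) * (star v ⬝ᵥ τ l *ᵥ v) = 0 := by
    simpa [sum_mulVec, dotProduct_sum, smul_mulVec, dotProduct_smul] using
      congrArg (star v ⬝ᵥ ·) hv
  have hterm : ∀ l ∈ Finset.univ, 0 ≤ (a l : ℂ) * (star v ⬝ᵥ τ l *ᵥ v) := fun l _ =>
    mul_nonneg (Complex.zero_le_real.mpr (ha l)) ((hτ l).dotProduct_mulVec_nonneg v)
  have hk' := (Finset.sum_eq_zero_iff_of_nonneg hterm).mp hsum k (Finset.mem_univ k)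
  rw [mul_eq_zero, Complex.ofReal_eq_zero] at hk'
  exact ((hτ k).dotProduct_mulVec_zero_iff v).mp (hk'.resolve_left hk)

theorem eq_zero_of_mulVec_eq_zero_of_linearIndependent {K : Type*} [Field K] {d : ℕ}
    {M : Matrix (Fin d) (Fin d) K} {b : Fin d → Fin d → K} (hb : LinearIndependent K b)
    (hMb : ∀ i, M *ᵥ b i = 0) : M = 0 := by
  rcases isEmpty_or_nonempty (Fin d) with hd | hd
  · exact Subsingleton.elim _ _
  let B := basisOfLinearIndependentOfCardEqFinrank hb (by simp)
  have : toLin' M = 0 := B.ext fun i => by simpa [B] using hMb i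
  simpa using this

theorem eq_zero_of_ker_le_ker_of_det_eq_zero {A B τ : Matrix (Fin 2) (Fin 2) ℂ}
    (hAB : (A + B).PosDef) (hA : A.det = 0) (hB : B.det = 0)
    (hτA : ∀ v, A *ᵥ v = 0 → τ *ᵥ v = 0) (hτB : ∀ v, B *ᵥ v = 0 → τ *ᵥ v = 0) : τ = 0 := by
  obtain ⟨v, hv0, hv⟩ := exists_mulVec_eq_zero_iff.mpr hA
  obtain ⟨w, hw0, hw⟩ := exists_mulVec_eq_zero_iff.mpr hB
  by_cases hvw : LinearIndependent ℂ ![v, w]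
  · refine eq_zero_of_mulVec_eq_zero_of_linearIndependent hvw fun i => ?_
    fin_cases i
    exacts [hτA v hv, hτB w hw]
  -- otherwise `w` is a multiple of `v`, so `v` lies in the kernel of `A + B`
  obtain ⟨s, t, hst, hs0⟩ : ∃ s t : ℂ, s • v + t • w = 0 ∧ s ≠ 0 := by
    obtain ⟨s, t, hst, hnot⟩ := by simpa [LinearIndependent.pair_iff] using hvw
    refine ⟨s, t, hst, fun hs => hw0 ?_⟩
    rw [hs, zero_smul, zero_add] at hst
    exact (smul_eq_zero.mp hst).resolve_left (hnot hs)
  have hBv : B *ᵥ v = 0 := by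
    have : s • v = -(t • w) := eq_neg_of_add_eq_zero_left hst
    have := congrArg (B *ᵥ ·) this
    simp only [mulVec_smul, mulVec_neg, hw, smul_zero, neg_zero] at this
    exact (smul_eq_zero.mp this).resolve_left hs0
  have := hAB.dotProduct_mulVec_pos hv0
  rw [add_mulVec, hv, hBv, add_zero, dotProduct_zero] at this
  exact absurd this (lt_irrefl 0)

theorem det_smul_one_add_smul_vecMulVec_sub_smul_vecMulVec (a α β : ℂ) (u w : Fin 2 → ℂ) :
    (a • 1 + β • vecMulVec w (star w) - α • vecMulVec u (star u)).det =
      a ^ 2 + a * (β * (star w ⬝ᵥ w) - α * (star u ⬝ᵥ u)) -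
        α * β * ((star u ⬝ᵥ u) * (star w ⬝ᵥ w) - (star u ⬝ᵥ w) * (star w ⬝ᵥ u)) := by
  simp [det_fin_two, vecMulVec, dotProduct, Fin.sum_univ_two]
  ring

def depolarizedState (t : ℝ) (u : Fin 2 → ℂ) : Matrix (Fin 2) (Fin 2) ℂ :=
  ((2 : ℝ) + t)⁻¹ • (1 + t • vecMulVec u (star u))

theorem posDef_depolarizedState {t : ℝ} (ht : 0 ≤ t) (u : Fin 2 → ℂ) :
    (depolarizedState t u).PosDef :=
  (PosDef.one.add_posSemidef ((posSemidef_vecMulVec_self_star u).smul ht)).smul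
    (by positivity)

theorem posDef_smul_depolarizedState_sub_add {E t : ℝ} (hE : 1 < E) (ht : 0 ≤ t)
    (u w : Fin 2 → ℂ) :
    (E • depolarizedState t w - depolarizedState t u +
      (E • depolarizedState t u - depolarizedState t w)).PosDef := by
  rw [show E • depolarizedState t w - depolarizedState t u +
      (E • depolarizedState t u - depolarizedState t w) =
      (E - 1) • (depolarizedState t u + depolarizedState t w) by module]
  exact ((posDef_depolarizedState ht u).add_posSemidef
    (posDef_depolarizedState ht w).posSemidef).smul (sub_pos.mpr hE)

theorem det_smul_depolarizedState_sub (E t : ℝ) {u w : Fin 2 → ℂ} (hu : star u ⬝ᵥ u = 1)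
    (hw : star w ⬝ᵥ w = 1) :
    (E • depolarizedState t w - depolarizedState t u).det =
      (((2 : ℝ) + t)⁻¹ : ℂ) ^ 2 * (((E : ℂ) - 1) ^ 2 * (1 + t) -
        t ^ 2 * E * (1 - (star u ⬝ᵥ w) * (star w ⬝ᵥ u))) := by
  have : E • depolarizedState t w - depolarizedState t u = (((2 : ℝ) + t)⁻¹ : ℂ) •
      (((E : ℂ) - 1) • 1 + ((E * t : ℝ) : ℂ) • vecMulVec w (star w) -
        (t : ℂ) • vecMulVec u (star u)) := by
    simp only [depolarizedState, ← Complex.coe_smul]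
    push_cast
    module
  rw [this, det_smul, det_smul_one_add_smul_vecMulVec_sub_smul_vecMulVec, hu, hw]
  simp only [Fintype.card_fin]
  push_cast
  ring

theorem det_smul_depolarizedState_sub_eq_zero {E t c : ℝ}
    (hroot : (E - 1) ^ 2 * (1 + t) = t ^ 2 * E * (1 - c ^ 2)) {u w : Fin 2 → ℂ}
    (hu : star u ⬝ᵥ u = 1) (hw : star w ⬝ᵥ w = 1)
    (huw : (star u ⬝ᵥ w) * (star w ⬝ᵥ u) = c ^ 2) :
    (E • depolarizedState t w - depolarizedState t u).det = 0 := by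
  rw [det_smul_depolarizedState_sub E t hu hw, huw]
  have := congrArg ((↑) : ℝ → ℂ) hroot
  push_cast at this
  linear_combination (((2 : ℝ) + t)⁻¹ : ℂ) ^ 2 * this

theorem tmax_pos_and_root {E c D t : ℝ} (hE : 1 < E) (hc : c ^ 2 < 1)
    (hD : D = (E - 1) ^ 2 + 4 * (1 - c ^ 2) * E)
    (ht : t = 2 * (E - 1) / (Real.sqrt D + 1 - E)) :
    0 < t ∧ (E - 1) ^ 2 * (1 + t) = t ^ 2 * E * (1 - c ^ 2) := by
  have hD0 : 0 ≤ D := by rw [hD]; nlinarith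
  have hsqrt : E - 1 < Real.sqrt D := by
    rw [Real.lt_sqrt (by linarith), hD]
    nlinarith
  have hden : 0 < Real.sqrt D + 1 - E := by linarith
  refine ⟨ht ▸ div_pos (by linarith) hden, ?_⟩
  have hts : t * Real.sqrt D = (2 + t) * (E - 1) := by
    rw [ht]; field_simp; ring
  have := congrArg (· ^ 2) hts
  simp only [mul_pow, Real.sq_sqrt hD0] at this
  rw [hD] at this
  linear_combination -this / 4

theorem IsProbVec.exists_pos {d : ℕ} {p : Fin d → ℝ} (hp : IsProbVec p) : ∃ k, 0 < p k := by
  by_contra! h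
  have : ∑ k, p k = 0 := Finset.sum_eq_zero fun k _ => le_antisymm (h k) (hp.1 k)
  linarith [hp.2]

theorem IsDP.pos_of_pos {n d : ℕ} {ε : ℝ} {p : Fin n → Fin d → ℝ} (hp : IsDP ε p) (i j : Fin n)
    {k : Fin d} (hk : 0 < p i k) : 0 < p j k :=
  pos_of_mul_pos_right (hk.trans_le (hp.2 i j k)) (Real.exp_pos ε).le

theorem smul_sub_eq_sum_of_eq_sum {n m d : ℕ} {p : Fin n → Fin m → ℝ}
    {τ : Fin m → Matrix (Fin d) (Fin d) ℂ} {σ : Fin n → Matrix (Fin d) (Fin d) ℂ}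
    (hσ : ∀ i, σ i = ∑ k, (p i k : ℂ) • τ k) (E : ℝ) (a b : Fin n) :
    E • σ b - σ a = ∑ k, ((E * p b k - p a k : ℝ) : ℂ) • τ k := by
  simp only [hσ, Finset.smul_sum, ← Finset.sum_sub_distrib, ← Complex.coe_smul]
  refine Finset.sum_congr rfl fun k _ => ?_
  push_cast
  module

theorem IsDP.eq_or_eq_of_det_eq_zero {n m : ℕ} {ε : ℝ} {p : Fin n → Fin m → ℝ} (hp : IsDP ε p)
    {τ : Fin m → Matrix (Fin 2) (Fin 2) ℂ} (hτ : ∀ k, IsDensityMatrix (τ k))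
    {σ : Fin n → Matrix (Fin 2) (Fin 2) ℂ} (hσ : ∀ i, σ i = ∑ k, (p i k : ℂ) • τ k)
    {a b : Fin n} (hpd : (Real.exp ε • σ b - σ a + (Real.exp ε • σ a - σ b)).PosDef)
    (hab : (Real.exp ε • σ b - σ a).det = 0) (hba : (Real.exp ε • σ a - σ b).det = 0)
    (k : Fin m) :
    p a k = Real.exp ε * p b k ∨ p b k = Real.exp ε * p a k := by
  by_contra! hk
  have hker : ∀ a b : Fin n, p a k ≠ Real.exp ε * p b k →
      ∀ v, (Real.exp ε • σ b - σ a) *ᵥ v = 0 → τ k *ᵥ v = 0 := fun a b hne v hv =>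
    mulVec_eq_zero_of_sum_smul_mulVec_eq_zero (fun l => (hτ l).1)
      (fun l => sub_nonneg.mpr (hp.2 a b l)) (smul_sub_eq_sum_of_eq_sum hσ _ a b ▸ hv)
      (sub_ne_zero.mpr hne.symm)
  have hτ0 := eq_zero_of_ker_le_ker_of_det_eq_zero hpd hab hba (hker a b hk.1) (hker b a hk.2)
  simpa [hτ0] using (hτ k).2

theorem false_of_pairwise_eq_mul_or_eq_mul {E x y z : ℝ} (hE : 1 < E) (hx : 0 < x) (hy : 0 < y)
    (hz : 0 < z) (hxy : x = E * y ∨ y = E * x) (hxz : x = E * z ∨ z = E * x)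
    (hyz : y = E * z ∨ z = E * y) : False := by
  rcases hxy with h₁ | h₁ <;> rcases hxz with h₂ | h₂ <;> rcases hyz with h₃ | h₃ <;>
    nlinarith [mul_pos hx (sub_pos.mpr hE), mul_pos hy (sub_pos.mpr hE),
      mul_pos hz (sub_pos.mpr hE)]

theorem statement17_general (ε c : ℝ) (hε : 0 < ε) (hc0 : 1 / 2 ≤ c) (hc1 : c < 1)
    (D tmax : ℝ)
    (hD : D = (Real.exp ε - 1) ^ 2 + 4 * (1 - c ^ 2) * Real.exp ε)
    (htmax : tmax = 2 * (Real.exp ε - 1) / (Real.sqrt D + 1 - Real.exp ε))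
    (u : Fin 3 → Fin 2 → ℂ)
    (hu : ∀ i, ∑ k, ‖u i k‖ ^ 2 = 1)
    (huv : ∀ i j, i ≠ j → ‖∑ k, starRingEnd ℂ (u i k) * u j k‖ = c)
    (ρ : Fin 3 → Matrix (Fin 2) (Fin 2) ℂ)
    (hρ : ∀ i, ρ i = ((2 : ℝ) + tmax)⁻¹ •
      ((1 : Matrix (Fin 2) (Fin 2) ℂ) +
        tmax • Matrix.of fun a b => u i a * starRingEnd ℂ (u i b)))
    (n : ℕ) (hn : 3 ≤ n)
    (σ : Fin n → Matrix (Fin 2) (Fin 2) ℂ)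
    (hext : ∀ i : Fin 3, σ (Fin.castLE hn i) = ρ i) :
    ¬ InEC ε σ := by
  rintro ⟨m, p, τ, hp, hτ, hστ⟩
  have hE : 1 < Real.exp ε := Real.one_lt_exp_iff.mpr hε
  obtain ⟨ht, hroot⟩ := tmax_pos_and_root hE (by nlinarith) hD htmax
  have hσ : ∀ i, σ (Fin.castLE hn i) = depolarizedState tmax (u i) := fun i =>
    (hext i).trans (hρ i)
  have hunit : ∀ i, star (u i) ⬝ᵥ u i = 1 := fun i => by
    simp only [dotProduct, Pi.star_apply, Complex.star_def, Complex.conj_mul']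
    exact_mod_cast hu i
  have hoverlap : ∀ i j, i ≠ j → (star (u i) ⬝ᵥ u j) * (star (u j) ⬝ᵥ u i) = c ^ 2 := by
    intro i j hij
    rw [star_dotProduct (u j), Complex.star_def, Complex.mul_conj', ← huv i j hij]
    rfl
  have hsat : ∀ i j : Fin 3, i ≠ j → ∀ k,
      p (Fin.castLE hn i) k = Real.exp ε * p (Fin.castLE hn j) k ∨
        p (Fin.castLE hn j) k = Real.exp ε * p (Fin.castLE hn i) k := by
    intro i j hij
    refine hp.eq_or_eq_of_det_eq_zero hτ hστ ?_ ?_ ?_ <;> simp only [hσ]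
    · exact posDef_smul_depolarizedState_sub_add hE ht.le (u i) (u j)
    · exact det_smul_depolarizedState_sub_eq_zero hroot (hunit i) (hunit j) (hoverlap i j hij)
    · exact det_smul_depolarizedState_sub_eq_zero hroot (hunit j) (hunit i) (hoverlap j i hij.symm)
  obtain ⟨k, hk⟩ := (hp.1 (Fin.castLE hn 0)).exists_pos
  exact false_of_pairwise_eq_mul_or_eq_mul hE hk (hp.pos_of_pos _ _ hk) (hp.pos_of_pos _ _ hk)
    (hsat 0 1 (by decide) k) (hsat 0 2 (by decide) k) (hsat 1 2 (by decide) k)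

/-- with `ρ_1,ρ_2,ρ_3` as in Statement 16, for every `n ≥ 3`, every CQ
`ε`-DP `n`-tuple `(σ_i)` with `σ_1 = ρ_1`, `σ_2 = ρ_2`, `σ_3 = ρ_3` is not in `EC_n(ε)`. -/
theorem statement17 (ε c : ℝ) (hε : 0 < ε) (hc0 : 1 / 2 ≤ c) (hc1 : c < 1)
    (D tmax : ℝ)
    (hD : D = (Real.exp ε - 1) ^ 2 + 4 * (1 - c ^ 2) * Real.exp ε)
    (htmax : tmax = 2 * (Real.exp ε - 1) / (Real.sqrt D + 1 - Real.exp ε))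
    (u : Fin 3 → Fin 2 → ℂ)
    (hu : ∀ i, ∑ k, ‖u i k‖ ^ 2 = 1)
    (huv : ∀ i j, i ≠ j → ‖∑ k, starRingEnd ℂ (u i k) * u j k‖ = c)
    (ρ : Fin 3 → Matrix (Fin 2) (Fin 2) ℂ)
    (hρ : ∀ i, ρ i = ((2 : ℝ) + tmax)⁻¹ •
      ((1 : Matrix (Fin 2) (Fin 2) ℂ) +
        tmax • Matrix.of fun a b => u i a * starRingEnd ℂ (u i b)))
    (n : ℕ) (hn : 3 ≤ n)
    (σ : Fin n → Matrix (Fin 2) (Fin 2) ℂ) (hσ : IsCQDP ε σ)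
    (hext : ∀ i : Fin 3, σ (Fin.castLE hn i) = ρ i) :
    ¬ InEC ε σ :=
  statement17_general ε c hε hc0 hc1 D tmax hD htmax u hu huv ρ hρ n hn σ hext

end
end

section
/- For every real ε > 0, CQ_2(ε) = EC_2(ε): a pair (ρ_1, ρ_2) of density matrices satisfies e^ε ρ_2 − ρ_1 ⪰ 0 and e^ε ρ_1 − ρ_2 ⪰ 0 if and only if there exist an ε-DP pair (p_1, p_2) of probability vectors in some ℝ^m and density matrices σ_1,…,σ_m such that ρ_i = Σ_{k=1}^m p_i(k) σ_k for i = 1,2. -/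
open scoped BigOperators Classical ComplexOrder
open Matrix

noncomputable section

/-! With `γ = e^ε`, the two CQ conditions say exactly that `τ₁ = (γρ₁ − ρ₂)/(γ − 1)` and
`τ₂ = (γρ₂ − ρ₁)/(γ − 1)` are positive semidefinite; their traces are `1`, and
`ρ₁ = (γτ₁ + τ₂)/(γ + 1)`, `ρ₂ = (τ₁ + γτ₂)/(γ + 1)` exhibit the pair as a mixture of `τ₁, τ₂`
with the `ε`-DP pair `(γ, 1)/(γ + 1)`, `(1, γ)/(γ + 1)`. Conversely, for a mixture,
`γρ₂ − ρ₁ = ∑ₖ (γp₂(k) − p₁(k)) σₖ` is a nonnegative combination of positive semidefinite matrices. -/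

section Module

variable {M : Type*} [AddCommGroup M] [Module ℝ M]

def normalizedExcess (c : ℝ) (x y : M) : M := (c - 1)⁻¹ • (c • x - y)

theorem smul_normalizedExcess_add_normalizedExcess {c : ℝ} (hc : c ≠ 1) (x y : M) :
    c • normalizedExcess c x y + normalizedExcess c y x = (c + 1) • x := by
  have hc' : c - 1 ≠ 0 := sub_ne_zero.2 hc
  simp only [normalizedExcess]
  match_scalars <;> field_simp <;> ring

end Module

def twoPointDist (a b : ℝ) : Fin 2 → ℝ := ![a / (a + b), b / (a + b)]

theorem isProbVec_twoPointDist {a b : ℝ} (ha : 0 ≤ a) (hb : 0 ≤ b) (hab : a + b ≠ 0) :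
    IsProbVec (twoPointDist a b) := by
  have hsum := add_nonneg ha hb
  refine ⟨Fin.forall_fin_two.2 ⟨div_nonneg ha hsum, div_nonneg hb hsum⟩, ?_⟩
  simp [twoPointDist, Fin.sum_univ_two, ← add_div, div_self hab]

theorem twoPointDist_le_mul_twoPointDist_swap {a b c : ℝ} (hab : 0 < a + b)
    (ha : a ≤ c * b) (hb : b ≤ c * a) (k : Fin 2) :
    twoPointDist a b k ≤ c * twoPointDist b a k := by
  simp only [twoPointDist, add_comm b a]
  fin_cases k <;> simpa [← mul_div_assoc, div_le_div_iff_of_pos_right hab]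

theorem sum_twoPointDist_smul {E : Type*} [AddCommGroup E] [Module ℂ E] [Module ℝ E]
    [IsScalarTower ℝ ℂ E] (a b : ℝ) (v : Fin 2 → E) :
    ∑ k, (twoPointDist a b k : ℂ) • v k = (a + b)⁻¹ • (a • v 0 + b • v 1) := by
  simp only [RCLike.real_smul_eq_coe_smul (K := ℂ), Fin.sum_univ_two, twoPointDist, smul_add,
    smul_smul]
  simp [div_eq_inv_mul]

theorem IsDensityMatrix.normalizedExcess {d : ℕ} {ρ σ : Matrix (Fin d) (Fin d) ℂ} {c : ℝ}
    (hρ : IsDensityMatrix ρ) (hσ : IsDensityMatrix σ) (hc : 1 < c)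
    (h : (c • ρ - σ).PosSemidef) : IsDensityMatrix (normalizedExcess c ρ σ) := by
  refine ⟨h.smul (inv_nonneg.2 (sub_nonneg.2 hc.le)), ?_⟩
  have hc' : (c : ℂ) - 1 ≠ 0 := by exact_mod_cast (sub_pos.2 hc).ne'
  simp only [_root_.normalizedExcess, trace_smul, trace_sub, hρ.2, hσ.2, Complex.real_smul]
  push_cast
  field_simp

theorem posSemidef_smul_sum_smul_sub_sum_smul {n ι : Type*} [Fintype n] [Fintype ι]
    {σ : ι → Matrix n n ℂ} (hσ : ∀ k, (σ k).PosSemidef) {a b : ι → ℝ} {c : ℝ}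
    (hab : ∀ k, b k ≤ c * a k) :
    (c • ∑ k, (a k : ℂ) • σ k - ∑ k, (b k : ℂ) • σ k).PosSemidef := by
  have hsum : c • ∑ k, (a k : ℂ) • σ k - ∑ k, (b k : ℂ) • σ k
      = ∑ k, (c * a k - b k) • σ k := by
    simp only [Finset.smul_sum, ← Finset.sum_sub_distrib, ← Complex.coe_smul, smul_smul,
      ← sub_smul, Complex.ofReal_sub, Complex.ofReal_mul]
  rw [hsum]
  exact posSemidef_sum _ fun k _ => (hσ k).smul (sub_nonneg.2 (hab k))

/-- `CQ_2(ε) = EC_2(ε)`: a pair of density matrices `(ρ₁, ρ₂)` satisfies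
`e^ε ρ₂ − ρ₁ ⪰ 0` and `e^ε ρ₁ − ρ₂ ⪰ 0` iff it is a mixture `ρ_i = Σ_k p_i(k) σ_k` of
density matrices `σ_k` with an `ε`-DP pair `(p₁,p₂)` of probability vectors. -/
theorem statement19 (ε : ℝ) (hε : 0 < ε) (d : ℕ)
    (ρ₁ ρ₂ : Matrix (Fin d) (Fin d) ℂ)
    (h₁ : IsDensityMatrix ρ₁) (h₂ : IsDensityMatrix ρ₂) :
    ((Real.exp ε • ρ₂ - ρ₁).PosSemidef ∧ (Real.exp ε • ρ₁ - ρ₂).PosSemidef) ↔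
    ∃ (m : ℕ) (p₁ p₂ : Fin m → ℝ) (σ : Fin m → Matrix (Fin d) (Fin d) ℂ),
      IsProbVec p₁ ∧ IsProbVec p₂ ∧
      (∀ k, p₁ k ≤ Real.exp ε * p₂ k ∧ p₂ k ≤ Real.exp ε * p₁ k) ∧
      (∀ k, IsDensityMatrix (σ k)) ∧
      ρ₁ = ∑ k, (p₁ k : ℂ) • σ k ∧ ρ₂ = ∑ k, (p₂ k : ℂ) • σ k := by
  set γ := Real.exp ε
  have hγ : 1 < γ := Real.one_lt_exp_iff.2 hε
  have hγγ : 1 ≤ γ * γ := by nlinarith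
  have hsum : γ + 1 ≠ 0 := by positivity
  constructor
  · rintro ⟨h₂₁, h₁₂⟩
    refine ⟨2, twoPointDist γ 1, twoPointDist 1 γ,
      ![normalizedExcess γ ρ₁ ρ₂, normalizedExcess γ ρ₂ ρ₁],
      isProbVec_twoPointDist (by positivity) zero_le_one hsum,
      isProbVec_twoPointDist zero_le_one (by positivity) (by rwa [add_comm]),
      fun k => ⟨twoPointDist_le_mul_twoPointDist_swap (by positivity) (mul_one γ).ge hγγ k,
        twoPointDist_le_mul_twoPointDist_swap (by positivity) hγγ (mul_one γ).ge k⟩,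
      Fin.forall_fin_two.2 ⟨h₁.normalizedExcess h₂ hγ h₁₂, h₂.normalizedExcess h₁ hγ h₂₁⟩,
      ?_, ?_⟩
    · rw [sum_twoPointDist_smul]
      simp [smul_normalizedExcess_add_normalizedExcess hγ.ne', inv_smul_smul₀ hsum]
    · rw [sum_twoPointDist_smul, add_comm (1 : ℝ), add_comm (1 • _)]
      simp [smul_normalizedExcess_add_normalizedExcess hγ.ne', inv_smul_smul₀ hsum]
  · rintro ⟨m, p₁, p₂, σ, -, -, hdp, hσ, rfl, rfl⟩
    exact ⟨posSemidef_smul_sum_smul_sub_sum_smul (fun k => (hσ k).1) fun k => (hdp k).1,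
      posSemidef_smul_sum_smul_sub_sum_smul (fun k => (hσ k).1) fun k => (hdp k).2⟩

end
end
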